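/- (Union property of dicut approximation.) Let G⃗, G⃗_1, …, G⃗_k be weighted directed graphs on a common vertex set V and s_1, …, s_k ≥ 0 scalars with G⃗ = ∪_{i=1}^k s_i·G⃗_i, i.e., the weight of each directed edge in G⃗ is Σ_i s_i times its weight in G⃗_i. Suppose that for every i ∈ [k], H⃗_i is a (β, ε)-directed cut approximation of G⃗_i. Then ∪_{i=1}^k s_i·H⃗_i is a (β, ε)-directed cut approximation of G⃗. -/

import Mathlib

open Matrix BigOperators

noncomputable section

/-- The 0/1 indicator matrix of a map from (edge) indices to vertices:
row `e` is the indicator of the vertex `f e`. -/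
def indMat {E V : Type*} [DecidableEq V] (f : E → V) : Matrix E V ℝ :=
  Matrix.of fun e v => if f e = v then (1 : ℝ) else 0

/-- The edge–vertex transfer matrix `B = H - T` of a directed graph with head map `hd`
and tail map `tl`. -/
def transMat {E V : Type*} [DecidableEq V] (hd tl : E → V) : Matrix E V ℝ :=
  indMat hd - indMat tl

/-- The directed Laplacian `Bᵀ W H`. -/
def dirLap {E V : Type*} [Fintype E] [DecidableEq E] [DecidableEq V]
    (hd tl : E → V) (w : E → ℝ) : Matrix V V ℝ :=
  (transMat hd tl)ᵀ * Matrix.diagonal w * indMat hd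

/-- The undirected Laplacian `Bᵀ W B` of the corresponding undirected graph. -/
def undLap {E V : Type*} [Fintype E] [DecidableEq E] [DecidableEq V]
    (hd tl : E → V) (w : E → ℝ) : Matrix V V ℝ :=
  (transMat hd tl)ᵀ * Matrix.diagonal w * transMat hd tl

/-- The corresponding undirected (simple) graph of a weighted directed graph:
`u ~ v` iff `u ≠ v` and some edge of positive weight joins them (in either direction). -/
def undSG {E V : Type*} (hd tl : E → V) (w : E → ℝ) : SimpleGraph V :=
  SimpleGraph.fromRel (fun u v => ∃ e, 0 < w e ∧ hd e = u ∧ tl e = v)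

/-- Directed Laplacian for a graph whose edges are indexed by pairs of vertices. -/
def dirLapP {V : Type*} [Fintype V] [DecidableEq V] (w : V × V → ℝ) : Matrix V V ℝ :=
  dirLap Prod.fst Prod.snd w

/-- Undirected Laplacian for a graph whose edges are indexed by pairs of vertices. -/
def undLapP {V : Type*} [Fintype V] [DecidableEq V] (w : V × V → ℝ) : Matrix V V ℝ :=
  undLap Prod.fst Prod.snd w

/-- Corresponding undirected graph for edges indexed by pairs of vertices. -/
def undSGP {V : Type*} (w : V × V → ℝ) : SimpleGraph V :=
  undSG Prod.fst Prod.snd w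

/-- `B` is a Moore–Penrose pseudoinverse of `A`. -/
def IsMPInv {V : Type*} [Fintype V] (A B : Matrix V V ℝ) : Prop :=
  A * B * A = A ∧ B * A * B = B ∧ (A * B)ᵀ = A * B ∧ (B * A)ᵀ = B * A

open Classical in
/-- The Moore–Penrose pseudoinverse of a (square, real) matrix. -/
noncomputable def mpinv {V : Type*} [Fintype V] (A : Matrix V V ℝ) : Matrix V V ℝ :=
  if h : ∃ B, IsMPInv A B then h.choose else 0

open Classical in
/-- The PSD square root of a positive semidefinite matrix (junk value `0` otherwise). -/
noncomputable def psdSqrt {V : Type*} [Fintype V] [DecidableEq V] (A : Matrix V V ℝ) :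
    Matrix V V ℝ :=
  if h : A.PosSemidef then
    (h.1.eigenvectorUnitary : Matrix V V ℝ) * Matrix.diagonal (Real.sqrt ∘ h.1.eigenvalues) *
      star (h.1.eigenvectorUnitary : Matrix V V ℝ)
  else 0

/-- `A^{†/2} = (A†)^{1/2} = (A^{1/2})†` for a PSD matrix `A`. -/
noncomputable def pinvSqrt {V : Type*} [Fintype V] [DecidableEq V] (A : Matrix V V ℝ) :
    Matrix V V ℝ :=
  mpinv (psdSqrt A)

/-- The ℓ₂→ℓ₂ (spectral) operator norm of `A` is at most `c`. -/
def l2OpNormLE {m n : Type*} [Fintype m] [Fintype n] (A : Matrix m n ℝ) (c : ℝ) : Prop :=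
  ∀ (x : m → ℝ) (y : n → ℝ),
    |x ⬝ᵥ A.mulVec y| ≤ c * Real.sqrt (∑ i, x i ^ 2) * Real.sqrt (∑ j, y j ^ 2)

/-- `|xᵀ A y| ≤ ε √((xᵀ L x)(yᵀ L y))` for all vectors `x, y`. -/
def bilinApprox {V : Type*} [Fintype V] (A L : Matrix V V ℝ) (ε : ℝ) : Prop :=
  ∀ x y : V → ℝ,
    |x ⬝ᵥ A.mulVec y| ≤ ε * Real.sqrt ((x ⬝ᵥ L.mulVec x) * (y ⬝ᵥ L.mulVec y))

/-- Schur complement of a `(V ⊕ X) × (V ⊕ X)` matrix onto the `V`-block. -/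
def schurInl {V X : Type*} [Fintype V] [Fintype X] (A : Matrix (V ⊕ X) (V ⊕ X) ℝ) :
    Matrix V V ℝ :=
  A.submatrix Sum.inl Sum.inl -
    A.submatrix Sum.inl Sum.inr * mpinv (A.submatrix Sum.inr Sum.inr) *
      A.submatrix Sum.inr Sum.inl

/-- Weight of the directed cut from `U` to `V ∖ U`. -/
def dicutW {V : Type*} [Fintype V] [DecidableEq V] (w : V × V → ℝ) (U : Finset V) : ℝ :=
  ∑ p : V × V, if p.1 ∈ U ∧ p.2 ∉ U then w p else 0

/-- `H⃗` (with weights `wH`) is a `(β, ε)`-directed cut approximation of `G⃗` (weights `wG`). -/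
def DicutApprox {V : Type*} [Fintype V] [DecidableEq V] (wG wH : V × V → ℝ)
    (β ε : ℝ) : Prop :=
  ∀ U : Finset V, U.Nonempty → U ≠ Finset.univ →
    |dicutW wH U - dicutW wG U|
      ≤ ε / Real.sqrt (β + 1) *
        Real.sqrt (dicutW wG U * (dicutW wG U + dicutW wG Uᶜ))


lemma dicutW_sum {V : Type*} [Fintype V] [DecidableEq V] (k : ℕ)
    (s : Fin k → ℝ) (w : Fin k → V × V → ℝ) (U : Finset V) :
    dicutW (fun p => ∑ i, s i * w i p) U = ∑ i, s i * dicutW (w i) U := by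
  unfold dicutW
  have h : ∀ p : V × V, (if p.1 ∈ U ∧ p.2 ∉ U then ∑ i, s i * w i p else 0)
      = ∑ i, if p.1 ∈ U ∧ p.2 ∉ U then s i * w i p else 0 := by
    intro p; split <;> simp
  simp_rw [h]
  rw [Finset.sum_comm]
  simp [Finset.mul_sum, mul_ite]

lemma dicutW_nonneg {V : Type*} [Fintype V] [DecidableEq V] (w : V × V → ℝ)
    (hw : ∀ p, 0 ≤ w p) (U : Finset V) : 0 ≤ dicutW w U := by
  apply Finset.sum_nonneg
  intro p _; split
  · exact hw p
  · exact le_rfl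

/-- union property of dicut approximation. -/
theorem stmt_15 {V : Type*} [Fintype V] [DecidableEq V] (k : ℕ)
    (s : Fin k → ℝ) (hs : ∀ i, 0 ≤ s i)
    (w w' : Fin k → V × V → ℝ)
    (hw : ∀ i p, 0 ≤ w i p) (hw' : ∀ i p, 0 ≤ w' i p)
    (β ε : ℝ) (hβ : 1 ≤ β) (hε₀ : 0 < ε) (hε₁ : ε < 1)
    (happrox : ∀ i, DicutApprox (w i) (w' i) β ε) :
    DicutApprox (fun p => ∑ i, s i * w i p) (fun p => ∑ i, s i * w' i p) β ε := by
  intro U hU hU'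
  have hεβ : 0 ≤ ε / Real.sqrt (β + 1) :=
    div_nonneg hε₀.le (Real.sqrt_nonneg _)
  simp only [dicutW_sum]
  rw [← Finset.sum_sub_distrib]
  set a := fun i => dicutW (w i) U with ha
  set b := fun i => dicutW (w i) Uᶜ with hb
  have hA : ∀ i, 0 ≤ a i := fun i => dicutW_nonneg _ (hw i) U
  have hB : ∀ i, 0 ≤ b i := fun i => dicutW_nonneg _ (hw i) Uᶜ
  calc |∑ i, (s i * dicutW (w' i) U - s i * a i)|
      ≤ ∑ i, |s i * dicutW (w' i) U - s i * a i| := Finset.abs_sum_le_sum_abs _ _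
    _ ≤ ∑ i, s i * (ε / Real.sqrt (β + 1) * Real.sqrt (a i * (a i + b i))) := by
        apply Finset.sum_le_sum
        intro i _
        rw [← mul_sub, abs_mul, abs_of_nonneg (hs i)]
        exact mul_le_mul_of_nonneg_left (happrox i U hU hU') (hs i)
    _ = ε / Real.sqrt (β + 1) *
          ∑ i, Real.sqrt (s i * a i) * Real.sqrt (s i * (a i + b i)) := by
        rw [Finset.mul_sum]
        congr 1; ext i
        rw [← Real.sqrt_mul (mul_nonneg (hs i) (hA i))]
        rw [show s i * a i * (s i * (a i + b i)) = s i ^ 2 * (a i * (a i + b i)) by ring]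
        rw [Real.sqrt_mul (sq_nonneg _), Real.sqrt_sq (hs i)]
        ring
    _ ≤ ε / Real.sqrt (β + 1) *
          Real.sqrt ((∑ i, s i * a i) * ∑ i, s i * (a i + b i)) := by
        apply mul_le_mul_of_nonneg_left _ hεβ
        have hnn : 0 ≤ ∑ i, Real.sqrt (s i * a i) * Real.sqrt (s i * (a i + b i)) :=
          Finset.sum_nonneg fun i _ => mul_nonneg (Real.sqrt_nonneg _) (Real.sqrt_nonneg _)
        have key := Finset.sum_sq_le_sum_mul_sum_of_sq_eq_mul Finset.univ
            (r := fun i => Real.sqrt (s i * a i) * Real.sqrt (s i * (a i + b i)))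
            (f := fun i => s i * a i) (g := fun i => s i * (a i + b i))
            (fun i _ => mul_nonneg (hs i) (hA i))
            (fun i _ => mul_nonneg (hs i) (add_nonneg (hA i) (hB i)))
            (fun i _ => by
              rw [mul_pow, Real.sq_sqrt (mul_nonneg (hs i) (hA i)),
                Real.sq_sqrt (mul_nonneg (hs i) (add_nonneg (hA i) (hB i)))])
        exact Real.le_sqrt_of_sq_le key
    _ = ε / Real.sqrt (β + 1) *
          Real.sqrt ((∑ i, s i * a i) * ((∑ i, s i * a i) + ∑ i, s i * b i)) := by
        have h2 : (∑ i, s i * (a i + b i)) = (∑ i, s i * a i) + ∑ i, s i * b i := by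
          rw [← Finset.sum_add_distrib]
          exact Finset.sum_congr rfl fun i _ => mul_add _ _ _
        rw [h2]

end
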